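/- Let K be a field of characteristic zero, a, b, c₀, …, cₙ ∈ K with a² - b² = 1, and set S = Σ_{j=0}^n cⱼ(x-y)^{2j} in A₁(K). Then the assignment f(x) = ax + by + S, f(y) = ay + bx + S extends to a K-algebra endomorphism of A₁(K), i.e., [f(y), f(x)] = 1. -/

import Mathlib

open scoped BigOperators

variable (K : Type*) [Field K]

/-- Defining relation of the first Weyl algebra: `y*x = x*y + 1`. -/
inductive WeylRel : FreeAlgebra K (Fin 2) → FreeAlgebra K (Fin 2) → Prop
  | rel : WeylRel (FreeAlgebra.ι K 1 * FreeAlgebra.ι K 0) (FreeAlgebra.ι K 0 * FreeAlgebra.ι K 1 + 1)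

/-- The first Weyl algebra `A₁(K) = K⟨x,y⟩/(yx - xy - 1)`. -/
abbrev Weyl := RingQuot (WeylRel K)

/-- The generator `x` of `A₁(K)`. -/
abbrev wx : Weyl K := RingQuot.mkAlgHom K (WeylRel K) (FreeAlgebra.ι K 0)

/-- The generator `y` of `A₁(K)`. -/
abbrev wy : Weyl K := RingQuot.mkAlgHom K (WeylRel K) (FreeAlgebra.ι K 1)

/-!
Write `X = a x + b y + S` and `Y = a y + b x + S`. Bilinearity gives
`[Y, X] = (a² - b²) [y, x] + (a - b) [S, x - y]`, and the second bracket vanishes because `S` is a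
polynomial in `x - y`. So `[Y, X] = 1`, and the universal property of `A₁(K)` yields `f`.
-/

theorem wy_mul_wx : wy K * wx K = wx K * wy K + 1 := by
  simpa using RingQuot.mkAlgHom_rel K (WeylRel.rel (K := K))

section lift

variable {A : Type*} [Ring A] [Algebra K A]

noncomputable def Weyl.lift (X Y : A) (h : Y * X = X * Y + 1) : Weyl K →ₐ[K] A :=
  RingQuot.liftAlgHom K ⟨FreeAlgebra.lift K ![X, Y], by rintro _ _ ⟨⟩; simpa using h⟩

@[simp]
theorem Weyl.lift_wx (X Y : A) (h : Y * X = X * Y + 1) : Weyl.lift K X Y h (wx K) = X := by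
  simp [Weyl.lift]

@[simp]
theorem Weyl.lift_wy (X Y : A) (h : Y * X = X * Y + 1) : Weyl.lift K X Y h (wy K) = Y := by
  simp [Weyl.lift]

end lift

theorem mul_sub_mul_eq_one_of_commute_sub {k A : Type*} [CommRing k] [Ring A] [Algebra k A]
    {a b : k} (hab : a ^ 2 - b ^ 2 = 1) {p q s : A} (hqp : q * p = p * q + 1)
    (hs : Commute s (p - q)) :
    (a • q + b • p + s) * (a • p + b • q + s) - (a • p + b • q + s) * (a • q + b • p + s) = 1 := by
  have hsplit : (a • q + b • p + s) * (a • p + b • q + s) - (a • p + b • q + s) * (a • q + b • p + s)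
      = (a ^ 2 - b ^ 2) • (q * p - p * q) + (a - b) • (s * (p - q) - (p - q) * s) := by
    simp only [mul_add, add_mul, mul_sub, sub_mul, smul_mul_assoc, mul_smul_comm]
    match_scalars <;> ring
  rw [hsplit, hs.eq, sub_self, smul_zero, add_zero, hab, one_smul, hqp, add_sub_cancel_left]

theorem stmt_2 (n : ℕ) (a b : K) (c : ℕ → K) (hab : a ^ 2 - b ^ 2 = 1) :
    (a • wy K + b • wx K + ∑ j ∈ Finset.range (n + 1), c j • (wx K - wy K) ^ (2 * j)) *
        (a • wx K + b • wy K + ∑ j ∈ Finset.range (n + 1), c j • (wx K - wy K) ^ (2 * j)) -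
      (a • wx K + b • wy K + ∑ j ∈ Finset.range (n + 1), c j • (wx K - wy K) ^ (2 * j)) *
        (a • wy K + b • wx K + ∑ j ∈ Finset.range (n + 1), c j • (wx K - wy K) ^ (2 * j)) = 1 ∧
    ∃ f : Weyl K →ₐ[K] Weyl K,
      f (wx K) = a • wx K + b • wy K + ∑ j ∈ Finset.range (n + 1), c j • (wx K - wy K) ^ (2 * j) ∧
      f (wy K) = a • wy K + b • wx K + ∑ j ∈ Finset.range (n + 1), c j • (wx K - wy K) ^ (2 * j) := by
  set S : Weyl K := ∑ j ∈ Finset.range (n + 1), c j • (wx K - wy K) ^ (2 * j)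
  have hS : Commute S (wx K - wy K) :=
    Commute.sum_left _ _ _ fun j _ => (Commute.pow_self _ _).smul_left _
  have hbracket := mul_sub_mul_eq_one_of_commute_sub hab (wy_mul_wx K) hS
  have hrel := eq_add_of_sub_eq' hbracket
  exact ⟨hbracket, Weyl.lift K _ _ hrel, Weyl.lift_wx K _ _ hrel, Weyl.lift_wy K _ _ hrel⟩
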